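/- Let G = (M, Γ_1,...,Γ_n) and G' = (M', Γ_1,...,Γ_n) be CGS-games on bisimilar concurrent game structures. A profile f of bisimulation-invariant strategies is a bisimulation-invariant Nash equilibrium in G if and only if f̃ is a bisimulation-invariant Nash equilibrium in G'. Consequently, a computation is sustained by a bisimulation-invariant equilibrium in G iff it is sustained by one in G'. -/
import Mathlib


namespace CGSGame

abbrev Dir (Ag Ac : Type) := Ag → Ac

structure CGS (Ag AP Ac St : Type) where
  init : St
  feasible : Ag → St → Set Ac
  feasible_nonempty : ∀ i s, (feasible i s).Nonempty
  label : St → Set AP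
  trans : St → Dir Ag Ac → St

variable {Ag AP Ac St St' : Type}

def CGS.legal (M : CGS Ag AP Ac St) (s : St) (d : Dir Ag Ac) : Prop :=
  ∀ i, d i ∈ M.feasible i s

def CGS.step (M : CGS Ag AP Ac St) (s : St) (d : Dir Ag Ac) (s' : St) : Prop :=
  M.legal s d ∧ M.trans s d = s'

structure IsBisim (M : CGS Ag AP Ac St) (M' : CGS Ag AP Ac St') (R : St → St' → Prop) : Prop where
  label_eq : ∀ s t, R s t → M.label s = M'.label t
  forth : ∀ s t s' d, R s t → M.step s d s' → ∃ t', M'.step t d t' ∧ R s' t'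
  back : ∀ s t t' d, R s t → M'.step t d t' → ∃ s', M.step s d s' ∧ R s' t'

def BisimState (M : CGS Ag AP Ac St) (M' : CGS Ag AP Ac St') (s : St) (t : St') : Prop :=
  ∃ R, IsBisim M M' R ∧ R s t

def Bisimilar (M : CGS Ag AP Ac St) (M' : CGS Ag AP Ac St') : Prop :=
  BisimState M M' M.init M'.init

def CGS.statesOf (M : CGS Ag AP Ac St) (k : ℕ → Dir Ag Ac) : ℕ → St
  | 0 => M.init
  | n + 1 => M.trans (M.statesOf k n) (k n)

def CGS.InfComp (M : CGS Ag AP Ac St) (k : ℕ → Dir Ag Ac) : Prop :=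
  ∀ n, M.legal (M.statesOf k n) (k n)

def CGS.runFrom (M : CGS Ag AP Ac St) : St → List (Dir Ag Ac) → List St
  | s, [] => [s]
  | s, d :: l => s :: M.runFrom (M.trans s d) l

def CGS.runOf (M : CGS Ag AP Ac St) (k : List (Dir Ag Ac)) : List St :=
  M.runFrom M.init k

def CGS.endFrom (M : CGS Ag AP Ac St) : St → List (Dir Ag Ac) → St
  | s, [] => s
  | s, d :: l => M.endFrom (M.trans s d) l

def CGS.finalState (M : CGS Ag AP Ac St) (k : List (Dir Ag Ac)) : St :=
  M.endFrom M.init k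

def CGS.legalFrom (M : CGS Ag AP Ac St) : St → List (Dir Ag Ac) → Prop
  | _, [] => True
  | s, d :: l => M.legal s d ∧ M.legalFrom (M.trans s d) l

def CGS.FinComp (M : CGS Ag AP Ac St) (k : List (Dir Ag Ac)) : Prop :=
  M.legalFrom M.init k

def CGS.traceOf (M : CGS Ag AP Ac St) (k : List (Dir Ag Ac)) : List (Set AP) :=
  (M.runOf k).map M.label

def CGS.infTraceOf (M : CGS Ag AP Ac St) (k : ℕ → Dir Ag Ac) : ℕ → Set AP :=
  fun n => M.label (M.statesOf k n)

def CGS.IsHistory (M : CGS Ag AP Ac St) (p : List St) : Prop :=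
  ∃ k, M.FinComp k ∧ p = M.runOf k

def CGS.IsCompStrategy (M : CGS Ag AP Ac St) (i : Ag) (f : List (Dir Ag Ac) → Ac) : Prop :=
  ∀ k, M.FinComp k → f k ∈ M.feasible i (M.finalState k)

def CGS.IsRunStrategy (M : CGS Ag AP Ac St) (i : Ag) (f : List St → Ac) : Prop :=
  ∀ k, M.FinComp k → f (M.runOf k) ∈ M.feasible i (M.finalState k)

def CGS.IsTraceStrategy (M : CGS Ag AP Ac St) (i : Ag) (g : List (Set AP) → Ac) : Prop :=
  ∀ k, M.FinComp k → g (M.traceOf k) ∈ M.feasible i (M.finalState k)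

def CGS.RunInvariant (M : CGS Ag AP Ac St) (f : List (Dir Ag Ac) → Ac) : Prop :=
  ∀ k k', M.FinComp k → M.FinComp k' → M.runOf k = M.runOf k' → f k = f k'

def CGS.TraceInvariant (M : CGS Ag AP Ac St) (f : List (Dir Ag Ac) → Ac) : Prop :=
  ∀ k k', M.FinComp k → M.FinComp k' → M.traceOf k = M.traceOf k' → f k = f k'

def inducedPrefix (f : Ag → List (Dir Ag Ac) → Ac) : ℕ → List (Dir Ag Ac)
  | 0 => []
  | n + 1 => inducedPrefix f n ++ [fun i => f i (inducedPrefix f n)]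

/-- The computation induced by a profile of computation-based strategies. -/
def inducedComp (_M : CGS Ag AP Ac St) (f : Ag → List (Dir Ag Ac) → Ac) : ℕ → Dir Ag Ac :=
  fun n i => f i (inducedPrefix f n)

def inducedPrefixRun (M : CGS Ag AP Ac St) (f : Ag → List St → Ac) : ℕ → List (Dir Ag Ac)
  | 0 => []
  | n + 1 => inducedPrefixRun M f n ++ [fun i => f i (M.runOf (inducedPrefixRun M f n))]

/-- The computation induced by a profile of run-based strategies. -/
def inducedCompRun (M : CGS Ag AP Ac St) (f : Ag → List St → Ac) : ℕ → Dir Ag Ac :=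
  fun n i => f i (M.runOf (inducedPrefixRun M f n))

def inducedPrefixTr (M : CGS Ag AP Ac St) (g : Ag → List (Set AP) → Ac) : ℕ → List (Dir Ag Ac)
  | 0 => []
  | n + 1 => inducedPrefixTr M g n ++ [fun i => g i (M.traceOf (inducedPrefixTr M g n))]

/-- The computation induced by a profile of trace-based strategies. -/
def inducedCompTr (M : CGS Ag AP Ac St) (g : Ag → List (Set AP) → Ac) : ℕ → Dir Ag Ac :=
  fun n i => g i (M.traceOf (inducedPrefixTr M g n))

/-- Statewise bisimilarity of (finite) runs. -/
def SWBisim (M : CGS Ag AP Ac St) (M' : CGS Ag AP Ac St') (p : List St) (p' : List St') : Prop :=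
  List.Forall₂ (BisimState M M') p p'

/-- A run-based strategy is bisimulation-invariant if it chooses the same action at
statewise bisimilar histories. -/
def CGS.BisimInvariant (M : CGS Ag AP Ac St) (f : List St → Ac) : Prop :=
  ∀ p p', M.IsHistory p → M.IsHistory p' → SWBisim M M p p' → f p = f p'

open Classical in
/-- The strategy of a bisimilar structure corresponding to a bisimulation-invariant strategy. -/
noncomputable def tilde [Inhabited Ac] (M : CGS Ag AP Ac St) (M' : CGS Ag AP Ac St')
    (f : List St → Ac) : List St' → Ac :=
  fun p' => if h : ∃ p, M.IsHistory p ∧ SWBisim M M' p p' then f h.choose else default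

section NE
variable [DecidableEq Ag]

def CompNE (M : CGS Ag AP Ac St) (G : Ag → Set (ℕ → Dir Ag Ac))
    (f : Ag → List (Dir Ag Ac) → Ac) : Prop :=
  (∀ i, M.IsCompStrategy i (f i)) ∧
  ∀ i g, M.IsCompStrategy i g →
    inducedComp M (Function.update f i g) ∈ G i → inducedComp M f ∈ G i

def RunNE (M : CGS Ag AP Ac St) (G : Ag → Set (ℕ → Dir Ag Ac))
    (f : Ag → List St → Ac) : Prop :=
  (∀ i, M.IsRunStrategy i (f i)) ∧
  ∀ i g, M.IsRunStrategy i g →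
    inducedCompRun M (Function.update f i g) ∈ G i → inducedCompRun M f ∈ G i

def TraceNE (M : CGS Ag AP Ac St) (G : Ag → Set (ℕ → Dir Ag Ac))
    (g : Ag → List (Set AP) → Ac) : Prop :=
  (∀ i, M.IsTraceStrategy i (g i)) ∧
  ∀ i h, M.IsTraceStrategy i h →
    inducedCompTr M (Function.update g i h) ∈ G i → inducedCompTr M g ∈ G i

def RunInvNE (M : CGS Ag AP Ac St) (G : Ag → Set (ℕ → Dir Ag Ac))
    (f : Ag → List (Dir Ag Ac) → Ac) : Prop :=
  (∀ i, M.IsCompStrategy i (f i) ∧ M.RunInvariant (f i)) ∧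
  ∀ i g, M.IsCompStrategy i g → M.RunInvariant g →
    inducedComp M (Function.update f i g) ∈ G i → inducedComp M f ∈ G i

def TraceInvNE (M : CGS Ag AP Ac St) (G : Ag → Set (ℕ → Dir Ag Ac))
    (f : Ag → List (Dir Ag Ac) → Ac) : Prop :=
  (∀ i, M.IsCompStrategy i (f i) ∧ M.TraceInvariant (f i)) ∧
  ∀ i g, M.IsCompStrategy i g → M.TraceInvariant g →
    inducedComp M (Function.update f i g) ∈ G i → inducedComp M f ∈ G i

def BisimInvNE (M : CGS Ag AP Ac St) (G : Ag → Set (ℕ → Dir Ag Ac))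
    (f : Ag → List St → Ac) : Prop :=
  (∀ i, M.IsRunStrategy i (f i) ∧ M.BisimInvariant (f i)) ∧
  ∀ i g, M.IsRunStrategy i g → M.BisimInvariant g →
    inducedCompRun M (Function.update f i g) ∈ G i → inducedCompRun M f ∈ G i

end NE

section Aux

variable {St'' : Type}

lemma IsBisim.symm' {M : CGS Ag AP Ac St} {M' : CGS Ag AP Ac St'} {R}
    (h : IsBisim M M' R) : IsBisim M' M (fun t s => R s t) where
  label_eq := fun t s hr => (h.label_eq s t hr).symm
  forth := fun t s t' d hr hstep => h.back s t t' d hr hstep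
  back := fun t s s' d hr hstep => h.forth s t s' d hr hstep

lemma BisimState.symm' {M : CGS Ag AP Ac St} {M' : CGS Ag AP Ac St'} {s t}
    (h : BisimState M M' s t) : BisimState M' M t s := by
  obtain ⟨R, hR, hst⟩ := h
  exact ⟨fun t s => R s t, hR.symm', hst⟩

lemma Bisimilar.symm' {M : CGS Ag AP Ac St} {M' : CGS Ag AP Ac St'}
    (h : Bisimilar M M') : Bisimilar M' M := BisimState.symm' h

lemma BisimState.trans' {M : CGS Ag AP Ac St} {M' : CGS Ag AP Ac St'} {M'' : CGS Ag AP Ac St''}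
    {s t u} (h : BisimState M M' s t) (h' : BisimState M' M'' t u) : BisimState M M'' s u := by
  obtain ⟨R, hR, hst⟩ := h
  obtain ⟨R', hR', htu⟩ := h'
  refine ⟨fun s u => ∃ t, R s t ∧ R' t u, ⟨?_, ?_, ?_⟩, t, hst, htu⟩
  · rintro s u ⟨t, h1, h2⟩
    rw [hR.label_eq s t h1, hR'.label_eq t u h2]
  · rintro s u s' d ⟨t, h1, h2⟩ hstep
    obtain ⟨t', ht', h1'⟩ := hR.forth s t s' d h1 hstep
    obtain ⟨u', hu', h2'⟩ := hR'.forth t u t' d h2 ht'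
    exact ⟨u', hu', t', h1', h2'⟩
  · rintro s u u' d ⟨t, h1, h2⟩ hstep
    obtain ⟨t', ht', h2'⟩ := hR'.back t u u' d h2 hstep
    obtain ⟨s', hs', h1'⟩ := hR.back s t t' d h1 ht'
    exact ⟨s', hs', t', h1', h2'⟩

lemma SWBisim.symm' {M : CGS Ag AP Ac St} {M' : CGS Ag AP Ac St'} {p p'}
    (h : SWBisim M M' p p') : SWBisim M' M p' p := by
  induction h with
  | nil => exact List.Forall₂.nil
  | cons hab _ ih => exact List.Forall₂.cons hab.symm' ih

lemma SWBisim.trans' {M : CGS Ag AP Ac St} {M' : CGS Ag AP Ac St'} {M'' : CGS Ag AP Ac St''}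
    {p q r} (h : SWBisim M M' p q) (h' : SWBisim M' M'' q r) : SWBisim M M'' p r := by
  induction h generalizing r with
  | nil => cases h'; exact List.Forall₂.nil
  | cons hab _ ih =>
    cases h' with
    | cons hbc htl => exact List.Forall₂.cons (hab.trans' hbc) (ih htl)

/-- Main stepwise lemma: a bisimulation relates runs along any legal sequence of directions. -/
lemma stepwise {M : CGS Ag AP Ac St} {M' : CGS Ag AP Ac St'} {R}
    (hR : IsBisim M M' R) :
    ∀ (k : List (Dir Ag Ac)) (s : St) (t : St'), R s t → M.legalFrom s k →
      M'.legalFrom t k ∧ R (M.endFrom s k) (M'.endFrom t k) ∧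
        SWBisim M M' (M.runFrom s k) (M'.runFrom t k) := by
  intro k
  induction k with
  | nil =>
    intro s t hst _
    exact ⟨trivial, hst, List.Forall₂.cons ⟨R, hR, hst⟩ List.Forall₂.nil⟩
  | cons d l ih =>
    intro s t hst hleg
    obtain ⟨hd, hl⟩ := hleg
    obtain ⟨t', ⟨hlegt, htrans⟩, hst'⟩ := hR.forth s t (M.trans s d) d hst ⟨hd, rfl⟩
    subst htrans
    obtain ⟨h1, h2, h3⟩ := ih (M.trans s d) (M'.trans t d) hst' hl
    exact ⟨⟨hlegt, h1⟩, h2, List.Forall₂.cons ⟨R, hR, hst⟩ h3⟩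

lemma finComp_of_finComp {M : CGS Ag AP Ac St} {M' : CGS Ag AP Ac St'}
    (hb : Bisimilar M M') {k} (hk : M.FinComp k) : M'.FinComp k := by
  obtain ⟨R, hR, hi⟩ := hb
  exact (stepwise hR k M.init M'.init hi hk).1

lemma swbisim_runOf {M : CGS Ag AP Ac St} {M' : CGS Ag AP Ac St'}
    (hb : Bisimilar M M') {k} (hk : M.FinComp k) :
    SWBisim M M' (M.runOf k) (M'.runOf k) := by
  obtain ⟨R, hR, hi⟩ := hb
  exact (stepwise hR k M.init M'.init hi hk).2.2

lemma bisim_finalState {M : CGS Ag AP Ac St} {M' : CGS Ag AP Ac St'}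
    (hb : Bisimilar M M') {k} (hk : M.FinComp k) :
    BisimState M M' (M.finalState k) (M'.finalState k) := by
  obtain ⟨R, hR, hi⟩ := hb
  exact ⟨R, hR, (stepwise hR k M.init M'.init hi hk).2.1⟩

lemma legal_of_bisimState {M : CGS Ag AP Ac St} {M' : CGS Ag AP Ac St'} {s t}
    (h : BisimState M M' s t) {d} (hd : M.legal s d) : M'.legal t d := by
  obtain ⟨R, hR, hst⟩ := h
  obtain ⟨t', ⟨hleg, _⟩, _⟩ := hR.forth s t (M.trans s d) d hst ⟨hd, rfl⟩
  exact hleg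

open Classical in
lemma mem_feasible_of_bisimState {M : CGS Ag AP Ac St} {M' : CGS Ag AP Ac St'} {s t}
    (h : BisimState M M' s t) {i : Ag} {a : Ac} (ha : a ∈ M.feasible i s) :
    a ∈ M'.feasible i t := by
  classical
  set d : Dir Ag Ac := fun j => if j = i then a else (M.feasible_nonempty j s).choose with hd
  have hleg : M.legal s d := by
    intro j
    by_cases hj : j = i
    · subst hj; simpa [hd] using ha
    · simpa [hd, hj] using (M.feasible_nonempty j s).choose_spec
  have := legal_of_bisimState h hleg i
  simpa [hd] using this

lemma feasible_eq_of_bisimState {M : CGS Ag AP Ac St} {M' : CGS Ag AP Ac St'} {s t}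
    (h : BisimState M M' s t) (i : Ag) : M.feasible i s = M'.feasible i t := by
  ext a
  exact ⟨fun ha => mem_feasible_of_bisimState h ha,
    fun ha => mem_feasible_of_bisimState h.symm' ha⟩

lemma swbisim_refl {M : CGS Ag AP Ac St} (p : List St) : SWBisim M M p p := by
  induction p with
  | nil => exact List.Forall₂.nil
  | cons a l ih =>
    refine List.Forall₂.cons ⟨Eq, ⟨?_, ?_, ?_⟩, rfl⟩ ih
    · rintro s t rfl; rfl
    · rintro s t s' d rfl hstep; exact ⟨s', hstep, rfl⟩
    · rintro s t t' d rfl hstep; exact ⟨t', hstep, rfl⟩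

/-- Key evaluation lemma: `tilde` agrees with `f` on corresponding runs. -/
lemma tilde_runOf [Inhabited Ac] {M : CGS Ag AP Ac St} {M' : CGS Ag AP Ac St'}
    (hb : Bisimilar M M') {f : List St → Ac} (hinv : M.BisimInvariant f)
    {k} (hk : M.FinComp k) : tilde M M' f (M'.runOf k) = f (M.runOf k) := by
  have hex : ∃ p, M.IsHistory p ∧ SWBisim M M' p (M'.runOf k) :=
    ⟨M.runOf k, ⟨k, hk, rfl⟩, swbisim_runOf hb hk⟩
  rw [tilde, dif_pos hex]
  exact hinv hex.choose (M.runOf k) hex.choose_spec.1 ⟨k, hk, rfl⟩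
    (hex.choose_spec.2.trans' (swbisim_runOf hb hk).symm')

lemma tilde_isRunStrategy [Inhabited Ac] {M : CGS Ag AP Ac St} {M' : CGS Ag AP Ac St'}
    (hb : Bisimilar M M') {i : Ag} {f : List St → Ac}
    (hf : M.IsRunStrategy i f) (hinv : M.BisimInvariant f) :
    M'.IsRunStrategy i (tilde M M' f) := by
  intro k hk'
  have hk : M.FinComp k := finComp_of_finComp hb.symm' hk'
  rw [tilde_runOf hb hinv hk, ← feasible_eq_of_bisimState (bisim_finalState hb hk) i]
  exact hf k hk

lemma tilde_bisimInvariant [Inhabited Ac] {M : CGS Ag AP Ac St} {M' : CGS Ag AP Ac St'}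
    (hb : Bisimilar M M') {f : List St → Ac} (hinv : M.BisimInvariant f) :
    M'.BisimInvariant (tilde M M' f) := by
  intro p' q' hp' hq' hsw
  obtain ⟨k, hk', hkeq⟩ := hp'
  obtain ⟨l, hl', hleq⟩ := hq'
  have hk : M.FinComp k := finComp_of_finComp hb.symm' hk'
  have hl : M.FinComp l := finComp_of_finComp hb.symm' hl'
  have hexp : ∃ p, M.IsHistory p ∧ SWBisim M M' p p' :=
    ⟨M.runOf k, ⟨k, hk, rfl⟩, hkeq ▸ swbisim_runOf hb hk⟩
  have hexq : ∃ p, M.IsHistory p ∧ SWBisim M M' p q' :=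
    ⟨M.runOf l, ⟨l, hl, rfl⟩, hleq ▸ swbisim_runOf hb hl⟩
  rw [tilde, tilde, dif_pos hexp, dif_pos hexq]
  exact hinv hexp.choose hexq.choose hexp.choose_spec.1 hexq.choose_spec.1
    ((hexp.choose_spec.2.trans' hsw).trans' hexq.choose_spec.2.symm')

lemma legalFrom_append {M : CGS Ag AP Ac St} :
    ∀ (k : List (Dir Ag Ac)) (s : St) (d : Dir Ag Ac),
      M.legalFrom s (k ++ [d]) ↔ M.legalFrom s k ∧ M.legal (M.endFrom s k) d := by
  intro k
  induction k with
  | nil => intro s d; simp [CGS.legalFrom, CGS.endFrom]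
  | cons e l ih =>
    intro s d
    simp only [List.cons_append, CGS.legalFrom, CGS.endFrom, ih, and_assoc, List.append_eq]

/-- Transfer lemma: pointwise-agreeing profiles induce the same computation. -/
lemma inducedPrefixRun_eq {M : CGS Ag AP Ac St} {M' : CGS Ag AP Ac St'}
    {f : Ag → List St → Ac} {f' : Ag → List St' → Ac}
    (hf : ∀ i, M.IsRunStrategy i (f i))
    (hag : ∀ i k, M.FinComp k → f i (M.runOf k) = f' i (M'.runOf k)) :
    ∀ n, inducedPrefixRun M f n = inducedPrefixRun M' f' n ∧
      M.FinComp (inducedPrefixRun M f n) := by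
  intro n
  induction n with
  | zero => exact ⟨rfl, trivial⟩
  | succ m ih =>
    obtain ⟨heq, hfc⟩ := ih
    have hdir : (fun i => f i (M.runOf (inducedPrefixRun M f m))) =
        (fun i => f' i (M'.runOf (inducedPrefixRun M' f' m))) := by
      funext i
      rw [← heq]
      exact hag i _ hfc
    constructor
    · show inducedPrefixRun M f m ++ _ = inducedPrefixRun M' f' m ++ _
      rw [hdir, heq]
    · show M.FinComp (inducedPrefixRun M f m ++ [_])
      rw [CGS.FinComp, legalFrom_append]
      exact ⟨hfc, fun i => hf i _ hfc⟩

lemma inducedCompRun_eq {M : CGS Ag AP Ac St} {M' : CGS Ag AP Ac St'}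
    {f : Ag → List St → Ac} {f' : Ag → List St' → Ac}
    (hf : ∀ i, M.IsRunStrategy i (f i))
    (hag : ∀ i k, M.FinComp k → f i (M.runOf k) = f' i (M'.runOf k)) :
    inducedCompRun M f = inducedCompRun M' f' := by
  funext n i
  obtain ⟨heq, hfc⟩ := inducedPrefixRun_eq hf hag n
  show f i (M.runOf (inducedPrefixRun M f n)) = f' i (M'.runOf (inducedPrefixRun M' f' n))
  rw [← heq]
  exact hag i _ hfc

lemma NE_transfer [DecidableEq Ag] [Inhabited Ac]
    (M : CGS Ag AP Ac St) (M' : CGS Ag AP Ac St') (hb : Bisimilar M M')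
    (G : Ag → Set (ℕ → Dir Ag Ac)) (f : Ag → List St → Ac)
    (hf : ∀ i, M.IsRunStrategy i (f i) ∧ M.BisimInvariant (f i)) :
    BisimInvNE M G f ↔ BisimInvNE M' G (fun i => tilde M M' (f i)) := by
  have hmain : inducedCompRun M f = inducedCompRun M' (fun i => tilde M M' (f i)) :=
    inducedCompRun_eq (fun i => (hf i).1)
      (fun i k hk => (tilde_runOf hb (hf i).2 hk).symm)
  constructor
  · rintro ⟨_, h2⟩
    refine ⟨fun i => ⟨tilde_isRunStrategy hb (hf i).1 (hf i).2,
        tilde_bisimInvariant hb (hf i).2⟩, ?_⟩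
    intro i g' hg' hg'inv hmem
    set g : List St → Ac := tilde M' M g' with hgdef
    have hgstrat : M.IsRunStrategy i g := tilde_isRunStrategy hb.symm' hg' hg'inv
    have hginv : M.BisimInvariant g := tilde_bisimInvariant hb.symm' hg'inv
    have hupd : inducedCompRun M (Function.update f i g) =
        inducedCompRun M' (Function.update (fun j => tilde M M' (f j)) i g') := by
      refine inducedCompRun_eq ?_ ?_
      · intro j
        by_cases hj : j = i
        · subst hj; simpa using hgstrat
        · simpa [Function.update_of_ne hj] using (hf j).1
      · intro j k hk
        by_cases hj : j = i
        · subst hj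
          simp only [Function.update_self]
          exact tilde_runOf hb.symm' hg'inv (finComp_of_finComp hb hk)
        · simp only [Function.update_of_ne hj]
          exact (tilde_runOf hb (hf j).2 hk).symm
    rw [← hmain]
    exact h2 i g hgstrat hginv (hupd ▸ hmem)
  · rintro ⟨_, h2'⟩
    refine ⟨hf, ?_⟩
    intro i g hg hginv hmem
    set g' : List St' → Ac := tilde M M' g with hg'def
    have hg'strat : M'.IsRunStrategy i g' := tilde_isRunStrategy hb hg hginv
    have hg'inv : M'.BisimInvariant g' := tilde_bisimInvariant hb hginv
    have hupd : inducedCompRun M (Function.update f i g) =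
        inducedCompRun M' (Function.update (fun j => tilde M M' (f j)) i g') := by
      refine inducedCompRun_eq ?_ ?_
      · intro j
        by_cases hj : j = i
        · subst hj; simpa using hg
        · simpa [Function.update_of_ne hj] using (hf j).1
      · intro j k hk
        by_cases hj : j = i
        · subst hj
          simp only [Function.update_self]
          exact (tilde_runOf hb hginv hk).symm
        · simp only [Function.update_of_ne hj]
          exact (tilde_runOf hb (hf j).2 hk).symm
    have := h2' i g' hg'strat hg'inv (hupd ▸ hmem)
    rwa [← hmain] at this

end Aux

theorem bisim_invariant_NE_invariance [DecidableEq Ag] [Inhabited Ac]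
    (M : CGS Ag AP Ac St) (M' : CGS Ag AP Ac St') (hb : Bisimilar M M')
    (G : Ag → Set (ℕ → Dir Ag Ac)) :
    (∀ f : Ag → List St → Ac,
       (∀ i, M.IsRunStrategy i (f i) ∧ M.BisimInvariant (f i)) →
       (BisimInvNE M G f ↔ BisimInvNE M' G (fun i => tilde M M' (f i)))) ∧
    (∀ k : ℕ → Dir Ag Ac, M.InfComp k →
       ((∃ f, BisimInvNE M G f ∧ inducedCompRun M f = k) ↔
        (∃ f', BisimInvNE M' G f' ∧ inducedCompRun M' f' = k))) := by
  constructor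
  · exact fun f hf => NE_transfer M M' hb G f hf
  · intro k _
    constructor
    · rintro ⟨f, hne, hk⟩
      refine ⟨fun i => tilde M M' (f i), (NE_transfer M M' hb G f hne.1).mp hne, ?_⟩
      rw [← hk]
      exact (inducedCompRun_eq (fun i => (hne.1 i).1)
        (fun i l hl => (tilde_runOf hb (hne.1 i).2 hl).symm)).symm
    · rintro ⟨f', hne', hk⟩
      refine ⟨fun i => tilde M' M (f' i), (NE_transfer M' M hb.symm' G f' hne'.1).mp hne', ?_⟩
      rw [← hk]
      exact inducedCompRun_eq
        (fun i => tilde_isRunStrategy hb.symm' (hne'.1 i).1 (hne'.1 i).2)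
        (fun i l hl => tilde_runOf hb.symm' (hne'.1 i).2 (finComp_of_finComp hb hl))
end CGSGame
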